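/- For the infinite family of words w_n = (snd(P,Q,cons) · rcv(P,Q,cons))^n · snd(P,Q,nil) · rcv(P,Q,nil) · snd(Q,P,ack) · rcv(Q,P,ack), every w_n is complete, channel-compliant, half-duplex, 1-bounded, and 1-synchronisable, yet the word u_n = (snd(P,Q,cons))^n · snd(P,Q,nil) · (rcv(P,Q,cons))^n · rcv(P,Q,nil) · snd(Q,P,ack) · rcv(Q,P,ack), which induces the same MSC, is not n-bounded for n ≥ 1 but is still half-duplex. -/

import Mathlib

/-- Events: `snd P Q m` is process `P` sending message `m` to `Q`;
    `rcv P Q m` is process `Q` receiving message `m` from `P`. -/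
inductive Ev where
  | snd : ℕ → ℕ → ℕ → Ev
  | rcv : ℕ → ℕ → ℕ → Ev
deriving DecidableEq

/-- Message values of send events on channel (P,Q) in w. -/
def sends (w : List Ev) (P Q : ℕ) : List ℕ :=
  w.filterMap fun e => match e with
    | .snd p q m => if p = P ∧ q = Q then some m else none
    | _ => none

/-- Message values of receive events on channel (P,Q) in w. -/
def recvs (w : List Ev) (P Q : ℕ) : List ℕ :=
  w.filterMap fun e => match e with
    | .rcv p q m => if p = P ∧ q = Q then some m else none
    | _ => none

def channelCompliant (w : List Ev) : Prop :=
  ∀ u, u <+: w → ∀ P Q, recvs u P Q <+: sends u P Q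

def complete (w : List Ev) : Prop :=
  ∀ P Q, sends w P Q = recvs w P Q

def bounded (B : ℕ) (w : List Ev) : Prop :=
  ∀ u, u <+: w → ∀ P Q, (sends u P Q).length ≤ (recvs u P Q).length + B

def halfDuplex (w : List Ev) : Prop :=
  ∀ u, u <+: w → ∀ P Q,
    sends u P Q = recvs u P Q ∨ sends u Q P = recvs u Q P

/-- Send at position i on channel (P,Q) is matched by receive at position j. -/
def Matches (w : List Ev) (P Q i j : ℕ) : Prop :=
  i < j ∧ j < w.length ∧
  (∃ m, w[i]? = some (.snd P Q m) ∧ w[j]? = some (.rcv P Q m)) ∧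
  sends (w.take (i+1)) P Q = recvs (w.take (j+1)) P Q

def IsSendAt (w : List Ev) (P Q i : ℕ) : Prop := ∃ m, w[i]? = some (Ev.snd P Q m)
def IsRcvAt (w : List Ev) (P Q i : ℕ) : Prop := ∃ m, w[i]? = some (Ev.rcv P Q m)
def MatchedAt (w : List Ev) (P Q i : ℕ) : Prop := ∃ j, Matches w P Q i j

/-- The process performing the event. -/
def actor : Ev → ℕ
  | .snd p _ _ => p
  | .rcv _ q _ => q

/-- Projection of a word onto the events of process X. -/
def proj (w : List Ev) (X : ℕ) : List Ev := w.filter (fun e => actor e == X)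

/-- Two words induce the same MSC (same per-process orders; with FIFO matching,
    this determines the matching). -/
def sameMSC (w v : List Ev) : Prop := ∀ X, proj w X = proj v X

/-- Existentially B-bounded: some linearisation of msc(w) is B-bounded. -/
def existBounded (B : ℕ) (w : List Ev) : Prop :=
  ∃ v, channelCompliant v ∧ sameMSC w v ∧ bounded B v

def isSnd : Ev → Prop
  | .snd _ _ _ => True
  | _ => False

def isRcv : Ev → Prop
  | .rcv _ _ _ => True
  | _ => False

/-- Positions i and j lie in the same block of the block decomposition. -/
def SameBlock (blocks : List (List Ev)) (i j : ℕ) : Prop :=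
  ∃ t, ((blocks.take t).flatten).length ≤ i ∧ j < ((blocks.take (t+1)).flatten).length

/-- w is k-synchronisable: some linearisation of msc(w) splits into blocks of
    at most k sends followed by at most k receives, with matched pairs co-located. -/
def kSynchronisable (k : ℕ) (w : List Ev) : Prop :=
  ∃ blocks : List (List Ev),
    channelCompliant blocks.flatten ∧ sameMSC w blocks.flatten ∧
    (∀ b ∈ blocks, ∃ s r, b = s ++ r ∧ s.length ≤ k ∧ r.length ≤ k ∧
      (∀ e ∈ s, isSnd e) ∧ (∀ e ∈ r, isRcv e)) ∧
    (∀ P Q i j, Matches blocks.flatten P Q i j → SameBlock blocks i j)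

/-- One step of the indistinguishability relation ∼. -/
inductive Sim1 : List Ev → List Ev → Prop
  | ss (u v : List Ev) (P Q R S m m' : ℕ) (h : P ≠ R) :
      Sim1 (u ++ Ev.snd P Q m :: Ev.snd R S m' :: v)
           (u ++ Ev.snd R S m' :: Ev.snd P Q m :: v)
  | rr (u v : List Ev) (P Q R S m m' : ℕ) (h : Q ≠ S) :
      Sim1 (u ++ Ev.rcv P Q m :: Ev.rcv R S m' :: v)
           (u ++ Ev.rcv R S m' :: Ev.rcv P Q m :: v)
  | sr (u v : List Ev) (P Q R S m m' : ℕ) (h1 : P ≠ S) (h2 : P ≠ R ∨ Q ≠ S) :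
      Sim1 (u ++ Ev.snd P Q m :: Ev.rcv R S m' :: v)
           (u ++ Ev.rcv R S m' :: Ev.snd P Q m :: v)
  | srSame (u v : List Ev) (P Q m m' : ℕ)
      (h : (recvs u P Q).length < (sends u P Q).length) :
      Sim1 (u ++ Ev.snd P Q m :: Ev.rcv P Q m' :: v)
           (u ++ Ev.rcv P Q m' :: Ev.snd P Q m :: v)

/-- The indistinguishability relation ∼ (finitely many swaps). -/
def Sim : List Ev → List Ev → Prop := Relation.ReflTransGen Sim1

/-!
The word `w n` is a concatenation of exchanges `snd a b m · rcv a b m`. An exchange is complete,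
and after a complete word `v` the channel contents of a prefix `v ++ r` are those of `r`; hence
channel-compliance, 1-boundedness and half-duplexness (an exchange uses a single direction) pass
from the exchanges to their concatenation, and in the decomposition into exchanges the FIFO
matching pairs each send with the receive right after it. Postponing the `cons` receives past the
`nil` send keeps the event sequence of each process, so `u n` induces the same MSC; it is still a
one-direction block on `(P, Q)` followed by the `(Q, P)` exchange, but its prefix ending with the
`nil` send has `n + 1` messages in transit.
-/

@[simp] lemma sends_nil (P Q : ℕ) : sends [] P Q = [] := rfl

@[simp] lemma recvs_nil (P Q : ℕ) : recvs [] P Q = [] := rfl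

@[simp] lemma sends_cons_snd (p q m P Q : ℕ) (l : List Ev) :
    sends (.snd p q m :: l) P Q = if p = P ∧ q = Q then m :: sends l P Q else sends l P Q := by
  by_cases h : p = P ∧ q = Q <;> simp [sends, h]

@[simp] lemma sends_cons_rcv (p q m P Q : ℕ) (l : List Ev) :
    sends (.rcv p q m :: l) P Q = sends l P Q := by
  simp [sends]

@[simp] lemma recvs_cons_rcv (p q m P Q : ℕ) (l : List Ev) :
    recvs (.rcv p q m :: l) P Q = if p = P ∧ q = Q then m :: recvs l P Q else recvs l P Q := by
  by_cases h : p = P ∧ q = Q <;> simp [recvs, h]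

@[simp] lemma recvs_cons_snd (p q m P Q : ℕ) (l : List Ev) :
    recvs (.snd p q m :: l) P Q = recvs l P Q := by
  simp [recvs]

@[simp] lemma sends_append (u v : List Ev) (P Q : ℕ) :
    sends (u ++ v) P Q = sends u P Q ++ sends v P Q := List.filterMap_append

@[simp] lemma recvs_append (u v : List Ev) (P Q : ℕ) :
    recvs (u ++ v) P Q = recvs u P Q ++ recvs v P Q := List.filterMap_append

lemma sends_map_snd (a b P Q : ℕ) (ms : List ℕ) :
    sends (ms.map (.snd a b)) P Q = if a = P ∧ b = Q then ms else [] := by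
  induction ms with
  | nil => simp
  | cons m ms ih => simp only [List.map_cons, sends_cons_snd, ih]; split_ifs <;> simp

lemma recvs_map_rcv (a b P Q : ℕ) (ms : List ℕ) :
    recvs (ms.map (.rcv a b)) P Q = if a = P ∧ b = Q then ms else [] := by
  induction ms with
  | nil => simp
  | cons m ms ih => simp only [List.map_cons, recvs_cons_rcv, ih]; split_ifs <;> simp

@[simp] lemma sends_map_rcv (a b P Q : ℕ) (ms : List ℕ) : sends (ms.map (.rcv a b)) P Q = [] := by
  induction ms <;> simp [*]

@[simp] lemma recvs_map_snd (a b P Q : ℕ) (ms : List ℕ) : recvs (ms.map (.snd a b)) P Q = [] := by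
  induction ms <;> simp [*]

lemma List.prefix_append_cases {α : Type*} {u v y : List α} (h : u <+: v ++ y) :
    u <+: v ∨ ∃ r, r <+: y ∧ u = v ++ r := by
  rcases le_or_gt u.length v.length with hl | hl
  · exact .inl (List.prefix_of_prefix_length_le h (List.prefix_append v y) hl)
  · obtain ⟨r, rfl⟩ := List.prefix_of_prefix_length_le (List.prefix_append v y) h hl.le
    exact .inr ⟨r, (List.prefix_append_right_inj v).mp h, rfl⟩

lemma complete_nil : complete [] := fun _ _ => rfl

lemma complete.append {v y : List Ev} (hv : complete v) (hy : complete y) : complete (v ++ y) :=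
  fun P Q => by rw [sends_append, recvs_append, hv, hy]

lemma channelCompliant_nil : channelCompliant [] := by
  intro u hu P Q
  simp [List.prefix_nil.mp hu]

lemma bounded_nil (B : ℕ) : bounded B [] := by
  intro u hu P Q
  simp [List.prefix_nil.mp hu]

lemma halfDuplex_nil : halfDuplex [] := by
  intro u hu P Q
  simp [List.prefix_nil.mp hu]

lemma channelCompliant_append {v y : List Ev} (hc : complete v) (hv : channelCompliant v)
    (hy : channelCompliant y) : channelCompliant (v ++ y) := by
  intro u hu P Q
  rcases List.prefix_append_cases hu with hu | ⟨r, hr, rfl⟩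
  · exact hv u hu P Q
  · rw [sends_append, recvs_append, hc]
    exact (List.prefix_append_right_inj _).mpr (hy r hr P Q)

lemma bounded_append {B : ℕ} {v y : List Ev} (hc : complete v) (hv : bounded B v)
    (hy : bounded B y) : bounded B (v ++ y) := by
  intro u hu P Q
  rcases List.prefix_append_cases hu with hu | ⟨r, hr, rfl⟩
  · exact hv u hu P Q
  · have := hy r hr P Q
    simp only [sends_append, recvs_append, List.length_append, hc P Q]
    omega

lemma halfDuplex_append {v y : List Ev} (hc : complete v) (hv : halfDuplex v)
    (hy : halfDuplex y) : halfDuplex (v ++ y) := by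
  intro u hu P Q
  rcases List.prefix_append_cases hu with hu | ⟨r, hr, rfl⟩
  · exact hv u hu P Q
  · simpa only [sends_append, recvs_append, hc P Q, hc Q P, List.append_cancel_left_eq]
      using hy r hr P Q

def onChannel (a b : ℕ) : Ev → Prop
  | .snd p q _ => p = a ∧ q = b
  | .rcv p q _ => p = a ∧ q = b

lemma sends_eq_nil_of_forall_onChannel {a b P Q : ℕ} {v : List Ev}
    (hv : ∀ e ∈ v, onChannel a b e) (h : ¬(a = P ∧ b = Q)) : sends v P Q = [] := by
  refine List.filterMap_eq_nil_iff.mpr fun e he => ?_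
  have := hv e he
  cases e <;> simp_all [onChannel]

lemma recvs_eq_nil_of_forall_onChannel {a b P Q : ℕ} {v : List Ev}
    (hv : ∀ e ∈ v, onChannel a b e) (h : ¬(a = P ∧ b = Q)) : recvs v P Q = [] := by
  refine List.filterMap_eq_nil_iff.mpr fun e he => ?_
  have := hv e he
  cases e <;> simp_all [onChannel]

lemma halfDuplex_of_forall_onChannel {a b : ℕ} (hab : a ≠ b) {v : List Ev}
    (hv : ∀ e ∈ v, onChannel a b e) : halfDuplex v := by
  intro u hu P Q
  have hu : ∀ e ∈ u, onChannel a b e := fun e he => hv e (hu.subset he)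
  by_cases h : a = P ∧ b = Q
  · right
    have h' : ¬(a = Q ∧ b = P) := by omega
    rw [sends_eq_nil_of_forall_onChannel hu h', recvs_eq_nil_of_forall_onChannel hu h']
  · left
    rw [sends_eq_nil_of_forall_onChannel hu h, recvs_eq_nil_of_forall_onChannel hu h]

def exchange (x : ℕ × ℕ × ℕ) : List Ev := [.snd x.1 x.2.1 x.2.2, .rcv x.1 x.2.1 x.2.2]

def exchangeWord (l : List (ℕ × ℕ × ℕ)) : List Ev := (l.map exchange).flatten

@[simp] lemma exchangeWord_nil : exchangeWord [] = [] := rfl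

@[simp] lemma exchangeWord_cons (x : ℕ × ℕ × ℕ) (l : List (ℕ × ℕ × ℕ)) :
    exchangeWord (x :: l) = exchange x ++ exchangeWord l := rfl

@[simp] lemma exchangeWord_append (l l' : List (ℕ × ℕ × ℕ)) :
    exchangeWord (l ++ l') = exchangeWord l ++ exchangeWord l' := by
  simp [exchangeWord]

lemma length_exchangeWord (l : List (ℕ × ℕ × ℕ)) : (exchangeWord l).length = 2 * l.length := by
  induction l with
  | nil => rfl
  | cons x l ih => simp [exchange, ih]; ring

lemma prefix_exchange_cases {u : List Ev} {x : ℕ × ℕ × ℕ} (hu : u <+: exchange x) :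
    u = [] ∨ u = [.snd x.1 x.2.1 x.2.2] ∨ u = exchange x := by
  simpa [exchange, List.inits] using List.mem_inits _ _ |>.mpr hu

lemma complete_exchange (x : ℕ × ℕ × ℕ) : complete (exchange x) := by
  intro P Q
  simp [exchange]

lemma channelCompliant_exchange (x : ℕ × ℕ × ℕ) : channelCompliant (exchange x) := by
  intro u hu P Q
  rcases prefix_exchange_cases hu with rfl | rfl | rfl
  · simp
  · simp
  · rw [complete_exchange x P Q]

lemma bounded_one_exchange (x : ℕ × ℕ × ℕ) : bounded 1 (exchange x) := by
  intro u hu P Q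
  rcases prefix_exchange_cases hu with rfl | rfl | rfl
  · simp
  · simp only [sends_cons_snd, recvs_cons_snd, sends_nil, recvs_nil]
    split_ifs <;> simp
  · rw [complete_exchange x P Q]
    omega

lemma halfDuplex_exchange {x : ℕ × ℕ × ℕ} (hx : x.1 ≠ x.2.1) : halfDuplex (exchange x) :=
  halfDuplex_of_forall_onChannel hx (by simp [exchange, onChannel])

lemma complete_exchangeWord (l : List (ℕ × ℕ × ℕ)) : complete (exchangeWord l) := by
  induction l with
  | nil => exact complete_nil
  | cons x l ih => exact (complete_exchange x).append ih

lemma channelCompliant_exchangeWord (l : List (ℕ × ℕ × ℕ)) :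
    channelCompliant (exchangeWord l) := by
  induction l with
  | nil => exact channelCompliant_nil
  | cons x l ih =>
    exact channelCompliant_append (complete_exchange x) (channelCompliant_exchange x) ih

lemma bounded_one_exchangeWord (l : List (ℕ × ℕ × ℕ)) : bounded 1 (exchangeWord l) := by
  induction l with
  | nil => exact bounded_nil 1
  | cons x l ih => exact bounded_append (complete_exchange x) (bounded_one_exchange x) ih

lemma halfDuplex_exchangeWord {l : List (ℕ × ℕ × ℕ)} (hl : ∀ x ∈ l, x.1 ≠ x.2.1) :
    halfDuplex (exchangeWord l) := by
  induction l with
  | nil => exact halfDuplex_nil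
  | cons x l ih =>
    simp only [List.forall_mem_cons] at hl
    exact halfDuplex_append (complete_exchange x) (halfDuplex_exchange hl.1) (ih hl.2)

lemma getElem?_exchangeWord_two_mul (l : List (ℕ × ℕ × ℕ)) (k : ℕ) :
    (exchangeWord l)[2 * k]? = l[k]?.map fun x => .snd x.1 x.2.1 x.2.2 := by
  induction l generalizing k with
  | nil => simp
  | cons x l ih =>
    cases k with
    | zero => simp [exchange]
    | succ k => simp [exchange, Nat.mul_succ, ← ih]

lemma getElem?_exchangeWord_two_mul_add_one (l : List (ℕ × ℕ × ℕ)) (k : ℕ) :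
    (exchangeWord l)[2 * k + 1]? = l[k]?.map fun x => .rcv x.1 x.2.1 x.2.2 := by
  induction l generalizing k with
  | nil => simp
  | cons x l ih =>
    cases k with
    | zero => simp [exchange]
    | succ k => simp [exchange, Nat.mul_succ, ← ih]

lemma take_two_mul_exchangeWord (l : List (ℕ × ℕ × ℕ)) (k : ℕ) :
    (exchangeWord l).take (2 * k) = exchangeWord (l.take k) := by
  induction l generalizing k with
  | nil => simp
  | cons x l ih =>
    cases k with
    | zero => simp
    | succ k => simp [exchange, Nat.mul_succ, ← ih]

lemma take_two_mul_add_one_exchangeWord {l : List (ℕ × ℕ × ℕ)} {k : ℕ} {x : ℕ × ℕ × ℕ}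
    (hx : l[k]? = some x) :
    (exchangeWord l).take (2 * k + 1) = exchangeWord (l.take k) ++ [.snd x.1 x.2.1 x.2.2] := by
  induction l generalizing k with
  | nil => simp at hx
  | cons y l ih =>
    cases k with
    | zero => simp_all [exchange]
    | succ k => simp_all [exchange, Nat.mul_succ, ← ih]

lemma length_sends_exchangeWord_take_mono (l : List (ℕ × ℕ × ℕ)) (P Q : ℕ) {k k' : ℕ}
    (h : k ≤ k') :
    (sends (exchangeWord (l.take k)) P Q).length ≤ (sends (exchangeWord (l.take k')) P Q).length :=
  (((List.take_prefix_take_left h).map exchange).flatten.filterMap _).length_le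

lemma sends_exchangeWord_take_succ {l : List (ℕ × ℕ × ℕ)} {k : ℕ} {P Q m : ℕ}
    (hk : l[k]? = some (P, Q, m)) :
    sends (exchangeWord (l.take (k + 1))) P Q = sends (exchangeWord (l.take k)) P Q ++ [m] := by
  simp [List.take_add_one, hk, exchange]

lemma exists_eq_two_mul_of_matches_exchangeWord {l : List (ℕ × ℕ × ℕ)} {P Q i j : ℕ}
    (h : Matches (exchangeWord l) P Q i j) : ∃ t, i = 2 * t ∧ j = 2 * t + 1 := by
  obtain ⟨hij, -, ⟨m, hi, hj⟩, hfifo⟩ := h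
  obtain ⟨t, rfl | rfl⟩ := Nat.even_or_odd' i
  swap
  · simp [getElem?_exchangeWord_two_mul_add_one] at hi
  obtain ⟨s, rfl | rfl⟩ := Nat.even_or_odd' j
  · simp [getElem?_exchangeWord_two_mul] at hj
  have ht : l[t]? = some (P, Q, m) := by simpa [getElem?_exchangeWord_two_mul] using hi
  have hs : l[s]? = some (P, Q, m) := by simpa [getElem?_exchangeWord_two_mul_add_one] using hj
  -- FIFO: as many `(P, Q)`-exchanges among the first `t + 1` as among the first `s + 1`
  rw [take_two_mul_add_one_exchangeWord ht, show 2 * s + 1 + 1 = 2 * (s + 1) by ring,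
    take_two_mul_exchangeWord, ← complete_exchangeWord _ P Q, sends_exchangeWord_take_succ hs,
    sends_append] at hfifo
  have hcount := congrArg List.length hfifo
  simp only [sends_cons_snd, and_self, if_true, sends_nil, List.length_append,
    List.length_singleton, Nat.add_right_cancel_iff] at hcount
  refine ⟨t, rfl, ?_⟩
  by_contra hts
  have hmono := length_sends_exchangeWord_take_mono l P Q (show t + 1 ≤ s by omega)
  rw [sends_exchangeWord_take_succ ht, List.length_append, hcount] at hmono
  simp at hmono

lemma kSynchronisable_one_exchangeWord (l : List (ℕ × ℕ × ℕ)) :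
    kSynchronisable 1 (exchangeWord l) := by
  refine ⟨l.map exchange, channelCompliant_exchangeWord l, fun _ => rfl, ?_, ?_⟩
  · intro b hb
    obtain ⟨x, -, rfl⟩ := List.mem_map.mp hb
    exact ⟨[.snd x.1 x.2.1 x.2.2], [.rcv x.1 x.2.1 x.2.2], rfl, by simp, by simp,
      by simp [isSnd], by simp [isRcv]⟩
  · intro P Q i j h
    have hj := h.2.1
    obtain ⟨t, rfl, rfl⟩ := exists_eq_two_mul_of_matches_exchangeWord h
    have hlen (k : ℕ) : ((l.map exchange).take k).flatten.length = 2 * min k l.length := by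
      rw [← List.map_take, ← exchangeWord, length_exchangeWord, List.length_take]
    rw [← exchangeWord, length_exchangeWord] at hj
    exact ⟨t, by rw [hlen]; omega, by rw [hlen]; omega⟩

lemma proj_append (v y : List Ev) (X : ℕ) : proj (v ++ y) X = proj v X ++ proj y X :=
  List.filter_append ..

lemma proj_map_snd (a b X : ℕ) (ms : List ℕ) :
    proj (ms.map (.snd a b)) X = if a = X then ms.map (.snd a b) else [] := by
  split_ifs with h <;> simp [proj, List.filter_map, Function.comp_def, actor, h]

lemma proj_map_rcv (a b X : ℕ) (ms : List ℕ) :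
    proj (ms.map (.rcv a b)) X = if b = X then ms.map (.rcv a b) else [] := by
  split_ifs with h <;> simp [proj, List.filter_map, Function.comp_def, actor, h]

lemma sameMSC.append_right {v v' : List Ev} (h : sameMSC v v') (y : List Ev) :
    sameMSC (v ++ y) (v' ++ y) := by
  intro X
  simpa only [proj_append, List.append_cancel_right_eq] using h X

lemma sameMSC_exchangeWord_map {a b : ℕ} (hab : a ≠ b) (ms : List ℕ) :
    sameMSC (exchangeWord (ms.map (a, b, ·))) (ms.map (.snd a b) ++ ms.map (.rcv a b)) := by
  intro X
  induction ms with
  | nil => rfl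
  | cons m ms ih =>
    have hexch : exchange (a, b, m) = [m].map (.snd a b) ++ [m].map (.rcv a b) := rfl
    rw [List.map_cons, exchangeWord_cons, hexch, proj_append, proj_append, ih]
    simp only [proj_append, proj_map_snd, proj_map_rcv]
    split_ifs <;> simp_all

lemma complete_map_snd_append_map_rcv (a b : ℕ) (ms : List ℕ) :
    complete (ms.map (.snd a b) ++ ms.map (.rcv a b)) := by
  intro P Q
  simp [sends_map_snd, recvs_map_rcv]

lemma onChannel_of_mem_map_snd_append_map_rcv {a b : ℕ} {ms : List ℕ} :
    ∀ e ∈ ms.map (.snd a b) ++ ms.map (.rcv a b), onChannel a b e := by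
  simp only [List.mem_append, List.mem_map]
  rintro e (⟨m, -, rfl⟩ | ⟨m, -, rfl⟩) <;> exact ⟨rfl, rfl⟩

lemma not_bounded_of_map_snd_prefix {B a b : ℕ} {ms : List ℕ} {v : List Ev}
    (hms : B < ms.length) (h : ms.map (.snd a b) <+: v) : ¬ bounded B v := by
  intro hB
  have := hB _ h a b
  simp only [sends_map_snd, and_self, if_true, recvs_map_snd, List.length_nil] at this
  omega

/-- Messages: `0` = cons, `1` = nil, `2` = ack. -/
theorem list_protocol_example (P Q : ℕ) (hPQ : P ≠ Q) (n : ℕ) :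
    let w : List Ev := (List.replicate n [Ev.snd P Q 0, Ev.rcv P Q 0]).flatten ++
      [Ev.snd P Q 1, Ev.rcv P Q 1, Ev.snd Q P 2, Ev.rcv Q P 2]
    let u : List Ev := List.replicate n (Ev.snd P Q 0) ++ [Ev.snd P Q 1] ++
      List.replicate n (Ev.rcv P Q 0) ++ [Ev.rcv P Q 1, Ev.snd Q P 2, Ev.rcv Q P 2]
    complete w ∧ channelCompliant w ∧ halfDuplex w ∧ bounded 1 w ∧
    kSynchronisable 1 w ∧ sameMSC w u ∧
    (1 ≤ n → ¬ bounded n u) ∧ halfDuplex u := by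
  intro w u
  set ms := List.replicate n 0 ++ [1]
  have hw : w = exchangeWord (ms.map (P, Q, ·) ++ [(Q, P, 2)]) := by
    simp [w, ms, exchange, exchangeWord, List.map_replicate]
  have hu : u = (ms.map (.snd P Q) ++ ms.map (.rcv P Q)) ++ exchange (Q, P, 2) := by
    simp [u, ms, exchange, List.map_replicate]
  have hdistinct : ∀ x ∈ ms.map (P, Q, ·) ++ [(Q, P, 2)], x.1 ≠ x.2.1 := by
    simp only [List.mem_append, List.mem_map, List.mem_singleton]
    rintro _ (⟨m, -, rfl⟩ | rfl)
    exacts [hPQ, hPQ.symm]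
  rw [hw, hu]
  refine ⟨complete_exchangeWord _, channelCompliant_exchangeWord _,
    halfDuplex_exchangeWord hdistinct, bounded_one_exchangeWord _,
    kSynchronisable_one_exchangeWord _, ?_, fun _ => ?_, ?_⟩
  · simpa using (sameMSC_exchangeWord_map hPQ ms).append_right (exchange (Q, P, 2))
  · exact not_bounded_of_map_snd_prefix (by simp [ms])
      ((List.prefix_append _ _).trans (List.prefix_append _ _))
  · exact halfDuplex_append (complete_map_snd_append_map_rcv P Q ms)
      (halfDuplex_of_forall_onChannel hPQ onChannel_of_mem_map_snd_append_map_rcv)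
      (halfDuplex_exchange hPQ.symm)
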